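/- Let ρ: ℝ → ℝ be C² and convex with bounded second derivative, and fix z ∈ ℝ. Then λ ↦ prox_{λρ}(z) is differentiable on (0, ∞) with derivative d/dλ prox_{λρ}(z) = − ρ'(prox_{λρ}(z)) / (1 + λ ρ''(prox_{λρ}(z))). -/

import Mathlib

open Set Filter Topology

/-! The minimizer `p = P λ` is characterized by the stationarity equation `p + λ ρ'(p) = z`.
Subtracting the equations at `λ` and `λ₀` and writing `ρ'(P λ) - ρ'(P λ₀) = m(λ) (P λ - P λ₀)`,
with `m(λ) ≥ 0` the difference quotient (`dslope`, equal to `ρ''(P λ₀)` where `P λ = P λ₀`)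
of the monotone function `ρ'`, gives
`(P λ - P λ₀) (1 + λ m(λ)) = -(λ - λ₀) ρ'(P λ₀)`.
Since `1 + λ m(λ) ≥ 1`, this makes `P` Lipschitz at `λ₀`, hence continuous, so `m(λ) → ρ''(P λ₀)`,
and the difference quotient of `P` is `-ρ'(P λ₀) / (1 + λ m(λ)) → -ρ'(P λ₀) / (1 + λ₀ ρ''(P λ₀))`. -/

lemma IsMinOn.add_mul_deriv_eq {ρ : ℝ → ℝ} {lam z p : ℝ}
    (hmin : IsMinOn (fun x => lam * ρ x + (x - z) ^ 2 / 2) univ p)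
    (hρ : DifferentiableAt ℝ ρ p) :
    p + lam * deriv ρ p = z := by
  have hquad : HasDerivAt (fun x : ℝ => (x - z) ^ 2 / 2) (p - z) p := by
    simpa using (((hasDerivAt_id p).sub_const z).pow 2).div_const 2
  have := (hmin.isLocalMin univ_mem).hasDerivAt_eq_zero (hρ.hasDerivAt.const_mul lam |>.add hquad)
  linarith

lemma Monotone.dslope_nonneg {g : ℝ → ℝ} (hg : Monotone g) (a b : ℝ) : 0 ≤ dslope g a b := by
  rcases eq_or_ne b a with rfl | hne
  · simpa [dslope_same] using hg.deriv_nonneg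
  · rw [dslope_of_ne _ hne]
    exact (hg.monotoneOn univ).slope_nonneg trivial trivial

section Resolvent

variable {g : ℝ → ℝ} {z : ℝ}

lemma sub_mul_one_add_mul_dslope_of_resolvent {a b s t : ℝ}
    (ha : a + s * g a = z) (hb : b + t * g b = z) :
    (a - b) * (1 + s * dslope g b a) = -((s - t) * g b) := by
  have hslope : (a - b) * dslope g b a = g a - g b := sub_smul_dslope g b a
  linear_combination ha - hb + s * hslope

lemma abs_sub_le_of_resolvent (hg : Monotone g) {a b s t : ℝ} (hs : 0 ≤ s)
    (ha : a + s * g a = z) (hb : b + t * g b = z) :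
    |a - b| ≤ |s - t| * |g b| := by
  have hfactor : 1 ≤ 1 + s * dslope g b a := by
    nlinarith [hg.dslope_nonneg b a]
  calc |a - b| ≤ |a - b| * (1 + s * dslope g b a) := le_mul_of_one_le_right (abs_nonneg _) hfactor
    _ = |s - t| * |g b| := by
      rw [← abs_of_pos (by linarith : 0 < 1 + s * dslope g b a), ← abs_mul,
        sub_mul_one_add_mul_dslope_of_resolvent ha hb, abs_neg, abs_mul]

variable {P : ℝ → ℝ} (hg : Monotone g) (hP : ∀ lam, 0 < lam → P lam + lam * g (P lam) = z)
include hg hP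

lemma continuousAt_resolvent {lam₀ : ℝ} (hlam₀ : 0 < lam₀) : ContinuousAt P lam₀ := by
  have hbound : ∀ᶠ lam in 𝓝 lam₀, ‖P lam - P lam₀‖ ≤ |lam - lam₀| * |g (P lam₀)| := by
    filter_upwards [Ioi_mem_nhds hlam₀] with lam hlam
    exact abs_sub_le_of_resolvent hg hlam.le (hP lam hlam) (hP lam₀ hlam₀)
  have hlim : Tendsto (fun lam => |lam - lam₀| * |g (P lam₀)|) (𝓝 lam₀) (𝓝 0) := by
    have hcont : Continuous fun lam => |lam - lam₀| * |g (P lam₀)| := by fun_prop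
    simpa using hcont.tendsto lam₀
  exact tendsto_iff_norm_sub_tendsto_zero.2
    (squeeze_zero' (Eventually.of_forall fun _ => norm_nonneg _) hbound hlim)

lemma hasDerivAt_resolvent {lam₀ : ℝ} (hlam₀ : 0 < lam₀) (hdiff : DifferentiableAt ℝ g (P lam₀)) :
    HasDerivAt P (-g (P lam₀) / (1 + lam₀ * deriv g (P lam₀))) lam₀ := by
  set m : ℝ → ℝ := fun lam => dslope g (P lam₀) (P lam)
  have hm_cont : ContinuousAt m lam₀ :=
    (continuousAt_dslope_same.2 hdiff).comp (continuousAt_resolvent hg hP hlam₀)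
  have hfactor_pos : ∀ lam, 0 ≤ lam → 0 < 1 + lam * m lam := fun lam hlam => by
    nlinarith [hg.dslope_nonneg (P lam₀) (P lam)]
  have hquot_cont : ContinuousAt (fun lam => -g (P lam₀) / (1 + lam * m lam)) lam₀ :=
    continuousAt_const.div (continuousAt_const.add (continuousAt_id.mul hm_cont))
      (hfactor_pos lam₀ hlam₀.le).ne'
  have hm_lam₀ : m lam₀ = deriv g (P lam₀) := dslope_same g _
  rw [hasDerivAt_iff_tendsto_slope, ← hm_lam₀]
  refine (hquot_cont.tendsto.mono_left nhdsWithin_le_nhds).congr' ?_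
  filter_upwards [self_mem_nhdsWithin, nhdsWithin_le_nhds (Ioi_mem_nhds hlam₀)] with lam hne hlam
  have hid := sub_mul_one_add_mul_dslope_of_resolvent (hP lam hlam) (hP lam₀ hlam₀)
  have hsub : lam - lam₀ ≠ 0 := sub_ne_zero.2 hne
  have hfac := (hfactor_pos lam hlam.le).ne'
  rw [slope_def_field, div_eq_div_iff hfac hsub]
  linear_combination -hid

end Resolvent

theorem prox_hasDerivAt_in_lambda_general
    (ρ : ℝ → ℝ) (hρ_conv : ConvexOn ℝ Set.univ ρ) (hρ_smooth : ContDiff ℝ 2 ρ)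
    (z : ℝ) (P : ℝ → ℝ)
    (hP : ∀ lam : ℝ, 0 < lam →
      IsMinOn (fun x => lam * ρ x + (x - z) ^ 2 / 2) Set.univ (P lam)) :
    ∀ lam : ℝ, 0 < lam →
      HasDerivAt P (-(deriv ρ (P lam)) / (1 + lam * iteratedDeriv 2 ρ (P lam))) lam := by
  intro lam hlam
  have hρ_diff : Differentiable ℝ ρ := hρ_smooth.differentiable (by norm_num)
  have hρ'_diff : Differentiable ℝ (deriv ρ) := hρ_smooth.differentiable_deriv_two
  have hρ'_mono : Monotone (deriv ρ) := fun a b hab =>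
    hρ_conv.monotoneOn_deriv (fun x _ => hρ_diff x) trivial trivial hab
  have hstat : ∀ lam, 0 < lam → P lam + lam * deriv ρ (P lam) = z := fun lam hlam =>
    (hP lam hlam).add_mul_deriv_eq (hρ_diff _)
  rw [iteratedDeriv_succ, iteratedDeriv_one]
  exact hasDerivAt_resolvent hρ'_mono hstat hlam (hρ'_diff _)

/-- for `C²` convex `ρ` with bounded second derivative and fixed `z`, the map
`λ ↦ prox_{λρ}(z)` (here `P`, characterized as the minimizer of `x ↦ λρ(x)+(x−z)²/2`)
is differentiable on `(0, ∞)` with derivative `−ρ'(P λ)/(1 + λρ''(P λ))`. -/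
theorem prox_hasDerivAt_in_lambda
    (ρ : ℝ → ℝ) (hρ_conv : ConvexOn ℝ Set.univ ρ) (hρ_smooth : ContDiff ℝ 2 ρ)
    (C : ℝ) (hρ''_bdd : ∀ x, |iteratedDeriv 2 ρ x| ≤ C)
    (z : ℝ) (P : ℝ → ℝ)
    (hP : ∀ lam : ℝ, 0 < lam →
      IsMinOn (fun x => lam * ρ x + (x - z) ^ 2 / 2) Set.univ (P lam)) :
    ∀ lam : ℝ, 0 < lam →
      HasDerivAt P (-(deriv ρ (P lam)) / (1 + lam * iteratedDeriv 2 ρ (P lam))) lam :=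
  prox_hasDerivAt_in_lambda_general ρ hρ_conv hρ_smooth z P hP
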